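/- arXiv:0910.2907 — 3 statements merged into one kernel-verified Lean document; each statement's English description precedes it below -/
import Mathlib

section
/- Let p be a prime with p ≡ 1 or 4 (mod 5). For all integers m ≥ 1 and n ≥ 1, if ν_p(m) = ν_p(n) (i.e., the base-p representations of m and n have the same number of trailing zeros) and s_p(m) ≡ s_p(n) (mod α(p)), then ν_p(F_m) = ν_p(F_n). -/
/-- The restricted period (rank of apparition) of the Fibonacci sequence modulo `p`:
the least positive `n` such that `p ∣ F n`. -/
noncomputable def fibAlpha (p : ℕ) : ℕ := sInf {n | 0 < n ∧ p ∣ Nat.fib n}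

/-!
Let `p` be an odd prime and `α = α(p)`. Expanding `φ ^ (M * u) = (φ * F_M + F_{M-1}) ^ u` gives
`F_{M u} = ∑ i, C(u, i) F_M^i F_{M-1}^(u-i) F_i`; when `p ∣ F_M` the term `i = 1` has valuation
`ν_p(F_M) + ν_p(u)` and all later ones are divisible by a higher power of `p`. Hence
`ν_p(F_n) = ν_p(F_α) + ν_p(n)` if `α ∣ n`, and `0` otherwise.

If `p ≡ ±1 (mod 5)`, then `5` is a square mod `p` by quadratic reciprocity, so both roots of
`x² = x + 1` lie in `𝔽_p` and Fermat's little theorem gives `p ∣ F_{p-1}`. Thus `α ∣ p - 1`,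
so `p ∤ α` and `n ≡ s_p(n) (mod α)`: whether `α ∣ n` is decided by `s_p(n)` mod `α`.
-/

open Nat Finset

section FibPow

variable {R : Type*} [CommRing R] {x y : R}

theorem pow_succ_eq_mul_fib_add (hx : x ^ 2 = x + 1) (n : ℕ) :
    x ^ (n + 1) = x * fib (n + 1) + fib n := by
  induction n with
  | zero => simp
  | succ n ih =>
    rw [pow_succ, ih, fib_add_two]
    push_cast
    linear_combination (fib (n + 1) : R) * hx

theorem pow_sub_pow_eq_mul_fib (hx : x ^ 2 = x + 1) (hy : y ^ 2 = y + 1) (n : ℕ) :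
    x ^ n - y ^ n = (x - y) * fib n := by
  cases n with
  | zero => simp
  | succ n => rw [pow_succ_eq_mul_fib_add hx, pow_succ_eq_mul_fib_add hy]; ring

end FibPow

open Real in
theorem fib_add_one_mul_eq_sum (m u : ℕ) :
    fib ((m + 1) * u) =
      ∑ i ∈ range (u + 1), u.choose i * fib (m + 1) ^ i * fib m ^ (u - i) * fib i := by
  have hφψ : goldenRatio - goldenConj ≠ 0 := by rw [goldenRatio_sub_goldenConj]; positivity
  apply Nat.cast_injective (R := ℝ)
  apply mul_left_cancel₀ hφψ
  push_cast
  rw [← pow_sub_pow_eq_mul_fib goldenRatio_sq goldenConj_sq, pow_mul, pow_mul,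
    pow_succ_eq_mul_fib_add goldenRatio_sq, pow_succ_eq_mul_fib_add goldenConj_sq, add_pow,
    add_pow, ← sum_sub_distrib, mul_sum]
  refine sum_congr rfl fun i _ => ?_
  rw [mul_pow, mul_pow]
  linear_combination (u.choose i * (fib (m + 1) : ℝ) ^ i * (fib m : ℝ) ^ (u - i)) *
    pow_sub_pow_eq_mul_fib goldenRatio_sq goldenConj_sq i

section padicValNat

variable {p : ℕ} [hp : Fact p.Prime]

theorem padicValNat_add_of_pow_succ_dvd {a b : ℕ} (ha : a ≠ 0)
    (hb : p ^ (padicValNat p a + 1) ∣ b) : padicValNat p (a + b) = padicValNat p a := by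
  have hab : a + b ≠ 0 := by omega
  apply le_antisymm
  · by_contra! hlt
    have hdvd : p ^ (padicValNat p a + 1) ∣ a + b := (padicValNat_dvd_iff_le hab).2 hlt
    exact pow_succ_padicValNat_not_dvd ha ((Nat.dvd_add_left hb).1 hdvd)
  · rw [← padicValNat_dvd_iff_le hab]
    exact dvd_add pow_padicValNat_dvd ((pow_dvd_pow p (le_succ _)).trans hb)

theorem padicValNat_le_padicValNat_choose_add {u i : ℕ} (hi : 1 ≤ i) (hiu : i ≤ u) :
    padicValNat p u ≤ padicValNat p (u.choose i) + padicValNat p i := by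
  obtain ⟨n, rfl⟩ := Nat.exists_eq_add_of_le' (by omega : 1 ≤ u)
  obtain ⟨k, rfl⟩ := Nat.exists_eq_add_of_le' hi
  have hC : n.choose k ≠ 0 := (choose_pos (by omega)).ne'
  have hC' : (n + 1).choose (k + 1) ≠ 0 := (choose_pos hiu).ne'
  calc padicValNat p (n + 1) ≤ padicValNat p ((n + 1) * n.choose k) := by
        rw [padicValNat.mul (by omega) hC]; omega
    _ = padicValNat p ((n + 1).choose (k + 1)) + padicValNat p (k + 1) := by
        rw [add_one_mul_choose_eq, padicValNat.mul hC' (by omega)]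

theorem padicValNat_add_two_le (hp2 : p ≠ 2) {i : ℕ} (hi : 2 ≤ i) :
    padicValNat p i + 2 ≤ i := by
  have hp3 : 3 ≤ p := by have := hp.out.two_le; omega
  have hpow : 3 ^ padicValNat p i ≤ i :=
    (Nat.pow_le_pow_left hp3 _).trans (Nat.le_of_dvd (by omega) pow_padicValNat_dvd)
  cases h : padicValNat p i with
  | zero => omega
  | succ k =>
    have := Nat.lt_pow_self (n := k) (a := 3) (by norm_num)
    rw [h, pow_succ] at hpow
    omega

theorem pow_dvd_choose_mul_pow (hp2 : p ≠ 2) {u i e a : ℕ} (hi : 2 ≤ i) (hiu : i ≤ u)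
    (he : 1 ≤ e) (ha : p ^ e ∣ a) : p ^ (padicValNat p u + e + 1) ∣ u.choose i * a ^ i := by
  have hu := padicValNat_le_padicValNat_choose_add (p := p) (by omega : 1 ≤ i) hiu
  have hi' := padicValNat_add_two_le hp2 hi
  have hdvd : p ^ (padicValNat p (u.choose i) + e * i) ∣ u.choose i * a ^ i := by
    rw [pow_add, pow_mul]
    exact mul_dvd_mul pow_padicValNat_dvd (pow_dvd_pow_of_dvd ha i)
  refine (pow_dvd_pow p ?_).trans hdvd
  nlinarith

theorem padicValNat_fib_mul (hp2 : p ≠ 2) {M u : ℕ} (hM0 : M ≠ 0) (hM : p ∣ fib M)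
    (hu : u ≠ 0) :
    padicValNat p (fib (M * u)) = padicValNat p (fib M) + padicValNat p u := by
  obtain ⟨m, rfl⟩ := Nat.exists_eq_add_one_of_ne_zero hM0
  obtain ⟨v, rfl⟩ := Nat.exists_eq_add_one_of_ne_zero hu
  set e := padicValNat p (fib (m + 1))
  have hF0 : fib (m + 1) ≠ 0 := (fib_pos.2 (succ_pos m)).ne'
  have he : 1 ≤ e := one_le_padicValNat_of_dvd hF0 hM
  have hFm : ¬ p ∣ fib m := fun h =>
    hp.out.ne_one (Nat.eq_one_of_dvd_coprimes (fib_coprime_fib_succ m) h hM)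
  have hFm0 : fib m ≠ 0 := fun h => hFm (h ▸ dvd_zero p)
  have hlead0 : (v + 1) * fib (m + 1) * fib m ^ v ≠ 0 := by positivity
  have hlead :
      padicValNat p ((v + 1) * fib (m + 1) * fib m ^ v) = padicValNat p (v + 1) + e := by
    rw [padicValNat.mul (by positivity) (pow_ne_zero _ hFm0), padicValNat.mul (by omega) hF0,
      padicValNat.pow, padicValNat.eq_zero_of_not_dvd hFm]
    omega
  rw [fib_add_one_mul_eq_sum, sum_range_succ', sum_range_succ']
  simp only [fib_zero, fib_one, mul_zero, add_zero, zero_add, choose_one_right, pow_one, mul_one,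
    add_tsub_cancel_right]
  rw [add_comm, padicValNat_add_of_pow_succ_dvd hlead0, hlead, add_comm]
  refine dvd_sum fun i hi => ?_
  rw [hlead]
  exact dvd_mul_of_dvd_left (dvd_mul_of_dvd_left (pow_dvd_choose_mul_pow hp2 (by omega)
    (by simp at hi; omega) he pow_padicValNat_dvd) _) _

end padicValNat

theorem isSquare_five_zmod {p : ℕ} [Fact p.Prime] (h : p % 5 = 1 ∨ p % 5 = 4) :
    IsSquare (5 : ZMod p) := by
  have : Fact (Nat.Prime 5) := ⟨by norm_num⟩
  have h5 := ZMod.exists_sq_eq_prime_iff_of_mod_four_eq_one (p := 5) (q := p) (by norm_num)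
    (by rintro rfl; omega)
  rw [← ZMod.natCast_mod p 5] at h5
  push_cast at h5
  rw [← h5]
  rcases h with h | h <;> rw [h]
  exacts [⟨1, rfl⟩, ⟨2, rfl⟩]

theorem cast_fib_eq_zero_of_pow_eq {K : Type*} [CommRing K] [IsDomain K] {x y : K}
    (hx : x ^ 2 = x + 1) (hy : y ^ 2 = y + 1) (hxy : x ≠ y) {n : ℕ} (hn : x ^ n = y ^ n) :
    (fib n : K) = 0 := by
  have h := pow_sub_pow_eq_mul_fib hx hy n
  rw [hn, sub_self] at h
  exact (mul_eq_zero.1 h.symm).resolve_left (sub_ne_zero.2 hxy)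

theorem one_add_div_two_sq {K : Type*} [Field K] {r : K} (h2 : (2 : K) ≠ 0)
    (hr : r * r = 5) :
    ((1 + r) / 2) ^ 2 = (1 + r) / 2 + 1 := by
  field_simp
  linear_combination hr

theorem prime_dvd_fib_sub_one {p : ℕ} [Fact p.Prime] (h : p % 5 = 1 ∨ p % 5 = 4) :
    p ∣ fib (p - 1) := by
  have : Fact (Nat.Prime 5) := ⟨by norm_num⟩
  obtain ⟨r, hr⟩ := isSquare_five_zmod h
  have h2 : (2 : ZMod p) ≠ 0 := by exact_mod_cast ZMod.prime_ne_zero p 2 (by rintro rfl; omega)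
  have h5 : (5 : ZMod p) ≠ 0 := by exact_mod_cast ZMod.prime_ne_zero p 5 (by rintro rfl; omega)
  have hr0 : r ≠ 0 := by rintro rfl; exact h5 (by simpa using hr)
  have hx := one_add_div_two_sq h2 hr.symm
  have hy := one_add_div_two_sq h2 (r := -r) (by rw [neg_mul_neg, hr])
  have hxy : (1 + r) / 2 * ((1 + -r) / 2) = -1 := by field_simp; linear_combination hr
  have hsub : (1 + r) / 2 - (1 + -r) / 2 = r := by field_simp; ring
  rw [← ZMod.natCast_eq_zero_iff]
  refine cast_fib_eq_zero_of_pow_eq hx hy (sub_ne_zero.1 (by rwa [hsub])) ?_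
  rw [ZMod.pow_card_sub_one_eq_one (left_ne_zero_of_mul (hxy ▸ neg_ne_zero.2 one_ne_zero)),
    ZMod.pow_card_sub_one_eq_one (right_ne_zero_of_mul (hxy ▸ neg_ne_zero.2 one_ne_zero))]

theorem modEq_digits_sum_of_modEq_one {b k : ℕ} (h : b ≡ 1 [MOD k]) (n : ℕ) :
    n ≡ (digits b n).sum [MOD k] :=
  calc n = ofDigits b (digits b n) := (ofDigits_digits b n).symm
    _ ≡ ofDigits 1 (digits b n) [MOD k] := ofDigits_modEq' b 1 k h _
    _ = (digits b n).sum := ofDigits_one _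

section fibAlpha

variable {p : ℕ}

theorem fibAlpha_pos (h : ∃ n, 0 < n ∧ p ∣ fib n) : 0 < fibAlpha p := (Nat.sInf_mem h).1

theorem dvd_fib_fibAlpha (h : ∃ n, 0 < n ∧ p ∣ fib n) : p ∣ fib (fibAlpha p) :=
  (Nat.sInf_mem h).2

theorem fibAlpha_dvd_iff (h : ∃ n, 0 < n ∧ p ∣ fib n) {n : ℕ} :
    fibAlpha p ∣ n ↔ p ∣ fib n := by
  refine ⟨fun hn => (dvd_fib_fibAlpha h).trans (fib_dvd _ _ hn), fun hn => ?_⟩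
  have hgcd : p ∣ fib (Nat.gcd (fibAlpha p) n) := by
    rw [fib_gcd]
    exact Nat.dvd_gcd (dvd_fib_fibAlpha h) hn
  have hle : fibAlpha p ≤ Nat.gcd (fibAlpha p) n :=
    Nat.sInf_le ⟨gcd_pos_of_pos_left n (fibAlpha_pos h), hgcd⟩
  exact Nat.gcd_eq_left_iff_dvd.1 (le_antisymm (Nat.gcd_le_left n (fibAlpha_pos h)) hle)

theorem padicValNat_fib [Fact p.Prime] (hp2 : p ≠ 2) (h : ∃ n, 0 < n ∧ p ∣ fib n)
    (hpα : ¬ p ∣ fibAlpha p) {n : ℕ} (hn : n ≠ 0) :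
    padicValNat p (fib n) =
      if fibAlpha p ∣ n then padicValNat p (fib (fibAlpha p)) + padicValNat p n else 0 := by
  split_ifs with hαn
  · obtain ⟨k, rfl⟩ := hαn
    have hk : k ≠ 0 := right_ne_zero_of_mul hn
    rw [padicValNat_fib_mul hp2 (fibAlpha_pos h).ne' (dvd_fib_fibAlpha h) hk,
      padicValNat.mul (fibAlpha_pos h).ne' hk, padicValNat.eq_zero_of_not_dvd hpα, zero_add]
  · exact padicValNat.eq_zero_of_not_dvd fun hdvd => hαn ((fibAlpha_dvd_iff h).2 hdvd)

end fibAlpha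

theorem nup_fib_depends_only_on_val_and_digitSum (p : ℕ) (hp : p.Prime)
    (h : p % 5 = 1 ∨ p % 5 = 4) (m n : ℕ) (hm : 1 ≤ m) (hn : 1 ≤ n)
    (hval : padicValNat p m = padicValNat p n)
    (hsum : (Nat.digits p m).sum ≡ (Nat.digits p n).sum [MOD fibAlpha p]) :
    padicValNat p (Nat.fib m) = padicValNat p (Nat.fib n) := by
  have : Fact p.Prime := ⟨hp⟩
  have hp2 : p ≠ 2 := by rintro rfl; omega
  have hdvd : p ∣ fib (p - 1) := prime_dvd_fib_sub_one h
  have hex : ∃ k, 0 < k ∧ p ∣ fib k := ⟨p - 1, by have := hp.two_le; omega, hdvd⟩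
  have hα : fibAlpha p ∣ p - 1 := (fibAlpha_dvd_iff hex).2 hdvd
  have hpα : ¬ p ∣ fibAlpha p := fun hd =>
    Nat.not_dvd_of_pos_of_lt (by have := hp.two_le; omega) (by omega) (hd.trans hα)
  have hp1 : p ≡ 1 [MOD fibAlpha p] := ((Nat.modEq_iff_dvd' hp.one_le).2 hα).symm
  have hmn : m ≡ n [MOD fibAlpha p] := (modEq_digits_sum_of_modEq_one hp1 m).trans
    (hsum.trans (modEq_digits_sum_of_modEq_one hp1 n).symm)
  rw [padicValNat_fib hp2 hex hpα (by omega : m ≠ 0),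
    padicValNat_fib hp2 hex hpα (by omega : n ≠ 0)]
  simp only [hval, hmn.dvd_iff dvd_rfl]
end

section
/- Let p be a prime with p ≡ 1 or 4 (mod 5) such that ν_p(F_{α(p)}) = 1. Then the ℤ-submodule of the module of sequences ℕ → ℤ spanned by the p-kernel of the sequence a(n) = ν_p(F_{n+1}) is generated by the p sequences n ↦ ν_p(F_{n+1}) and n ↦ ν_p(F_{pn+j+1}) for 0 ≤ j ≤ p − 2. In particular, this sequence is p-regular of rank at most p. -/
/-- The `k`-kernel of a sequence `a : ℕ → ℤ`: the set of sequences
`n ↦ a (k ^ e * n + i)` for `e ≥ 0` and `0 ≤ i ≤ k ^ e - 1`. -/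
def kKernel (k : ℕ) (a : ℕ → ℤ) : Set (ℕ → ℤ) :=
  {b | ∃ e i : ℕ, i ≤ k ^ e - 1 ∧ b = fun n => a (k ^ e * n + i)}

/-!
Under `ν_p(F_α) = 1` the `p`-adic valuation of Fibonacci numbers is completely explicit:
for `p` odd and `p ∣ F_n` one has `ν_p(F_{kn}) = ν_p(F_n) + ν_p(k)` (read off from the expansion
of `F_{kn}` modulo `F_n³`), hence `ν_p(F_m) = [α ∣ m] (ν_p(m) + 1)`.
Since `p ≡ ±1 (mod 5)`, `5` is a square mod `p` and Binet's formula with Fermat's little theorem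
gives `p ∣ F_{p-1}`, so `α ∣ p - 1` and `p^e ≡ 1 (mod α)`. For `i + 1 < p^e` the kernel sequence
`n ↦ ν_p(F_{p^e n + i + 1})` is then `(ν_p(i+1) + 1) [α ∣ n + i + 1]`, a multiple of the generator
with `j = i mod α`; for `i + 1 = p^e` it is `a(n) + e [α ∣ n + 1]`.
-/

theorem fib_mul_sub_eq_pow_sub_pow {R : Type*} [CommRing R] {φ ψ : R} (hsum : φ + ψ = 1)
    (hprod : φ * ψ = -1) (n : ℕ) : (Nat.fib n : R) * (φ - ψ) = φ ^ n - ψ ^ n := by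
  induction n using Nat.twoStepInduction with
  | zero => simp
  | one => simp
  | more n ih₀ ih₁ =>
    rw [Nat.fib_add_two, Nat.cast_add]
    linear_combination ih₀ + ih₁ + (ψ ^ (n + 1) - φ ^ (n + 1)) * hsum + (φ ^ n - ψ ^ n) * hprod

theorem dvd_fib_sub_one_of_mod_five {p : ℕ} [hp : Fact p.Prime] (h : p % 5 = 1 ∨ p % 5 = 4) :
    p ∣ Nat.fib (p - 1) := by
  have hp2 : p ≠ 2 := by rintro rfl; omega
  obtain ⟨s, hs⟩ : IsSquare (5 : ZMod p) := by
    have : Fact (Nat.Prime 5) := ⟨by norm_num⟩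
    have h5 : IsSquare (p : ZMod 5) := by
      rw [← ZMod.natCast_mod]
      rcases h with h | h <;> rw [h]
      exacts [⟨1, rfl⟩, ⟨2, rfl⟩]
    exact_mod_cast (ZMod.exists_sq_eq_prime_iff_of_mod_four_eq_one (p := 5) rfl hp2).mp h5
  have h2 : (2 : ZMod p) ≠ 0 := by
    exact_mod_cast (ZMod.natCast_eq_zero_iff 2 p).not.mpr fun h ↦
      hp2 ((Nat.prime_dvd_prime_iff_eq hp.out Nat.prime_two).mp h)
  have hs0 : s ≠ 0 := by
    rintro rfl
    have h5 : ((5 : ℕ) : ZMod p) = 0 := by exact_mod_cast hs.trans (mul_zero 0)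
    rw [ZMod.natCast_eq_zero_iff, Nat.prime_dvd_prime_iff_eq hp.out (by norm_num)] at h5
    omega
  obtain ⟨φ, ψ, hsum, hprod, hdiff⟩ : ∃ φ ψ : ZMod p, φ + ψ = 1 ∧ φ * ψ = -1 ∧ φ - ψ = s :=
    ⟨(1 + s) / 2, (1 - s) / 2, by field_simp; ring, by field_simp; linear_combination hs,
      by field_simp; ring⟩
  have hφ : φ ≠ 0 := left_ne_zero_of_mul (hprod ▸ neg_ne_zero.mpr one_ne_zero)
  have hψ : ψ ≠ 0 := right_ne_zero_of_mul (hprod ▸ neg_ne_zero.mpr one_ne_zero)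
  have key := fib_mul_sub_eq_pow_sub_pow hsum hprod (p - 1)
  rw [ZMod.pow_card_sub_one_eq_one hφ, ZMod.pow_card_sub_one_eq_one hψ, sub_self, hdiff] at key
  exact (ZMod.natCast_eq_zero_iff _ _).mp ((mul_eq_zero.mp key).resolve_right hs0)

section fibAlpha

variable {p m : ℕ}

theorem fibAlpha_pos_and_dvd (hm : 0 < m) (hpm : p ∣ Nat.fib m) :
    0 < fibAlpha p ∧ p ∣ Nat.fib (fibAlpha p) :=
  Nat.sInf_mem (s := {n | 0 < n ∧ p ∣ Nat.fib n}) ⟨m, hm, hpm⟩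

theorem dvd_fib_iff_fibAlpha_dvd (hm : 0 < m) (hpm : p ∣ Nat.fib m) (n : ℕ) :
    p ∣ Nat.fib n ↔ fibAlpha p ∣ n := by
  obtain ⟨hα0, hpα⟩ := fibAlpha_pos_and_dvd hm hpm
  refine ⟨fun hpn ↦ ?_, fun h ↦ hpα.trans (Nat.fib_dvd _ _ h)⟩
  rcases n.eq_zero_or_pos with rfl | hn
  · exact dvd_zero _
  have hg : p ∣ Nat.fib ((fibAlpha p).gcd n) := by
    rw [Nat.fib_gcd]; exact Nat.dvd_gcd hpα hpn
  have hαg : fibAlpha p ≤ (fibAlpha p).gcd n := Nat.sInf_le ⟨Nat.gcd_pos_of_pos_right _ hn, hg⟩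
  rw [← le_antisymm (Nat.le_of_dvd hα0 (Nat.gcd_dvd_left _ _)) hαg]
  exact Nat.gcd_dvd_right _ _

end fibAlpha

theorem natCast_fib_add (m n : ℕ) : (Nat.fib (m + n) : ℤ) =
    Nat.fib m * (Nat.fib (n + 1) - Nat.fib n) + Nat.fib (m + 1) * Nat.fib n := by
  cases n with
  | zero => simp
  | succ n =>
    rw [← add_assoc, Nat.fib_add, Nat.fib_add_two]
    push_cast
    ring

/-- `F_{kn} ≡ k F_n F_{n+1}^{k-1} - C(k,2) F_n² F_{n+1}^{k-2} (mod F_n³)`, multiplied through by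
`F_{n+1}²` so that the exponents stay natural for `k < 2`; the congruence for `F_{kn+1}` carries
the induction. -/
theorem exists_fib_mul_mul_fib_succ_sq (n k : ℕ) : ∃ x y : ℤ,
    (Nat.fib (k * n) : ℤ) * Nat.fib (n + 1) ^ 2 =
      k * Nat.fib n * Nat.fib (n + 1) ^ (k + 1)
        - k.choose 2 * Nat.fib n ^ 2 * Nat.fib (n + 1) ^ k + x * Nat.fib n ^ 3 ∧
    (Nat.fib (k * n + 1) : ℤ) * Nat.fib (n + 1) ^ 2 =
      Nat.fib (n + 1) ^ (k + 2)
        + k.choose 2 * Nat.fib n ^ 2 * Nat.fib (n + 1) ^ k + y * Nat.fib n ^ 3 := by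
  set c : ℤ := ((Nat.fib n : ℕ) : ℤ)
  set d : ℤ := ((Nat.fib (n + 1) : ℕ) : ℤ)
  induction k with
  | zero => exact ⟨0, 0, by simp, by simp⟩
  | succ k ih =>
    obtain ⟨x, y, hx, hy⟩ := ih
    have hA : (Nat.fib ((k + 1) * n) : ℤ) =
        Nat.fib (k * n) * (d - c) + Nat.fib (k * n + 1) * c := by
      rw [Nat.succ_mul, natCast_fib_add]
    have hB : (Nat.fib ((k + 1) * n + 1) : ℤ) = Nat.fib (k * n) * c + Nat.fib (k * n + 1) * d := by
      rw [Nat.succ_mul, Nat.fib_add]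
      push_cast
      ring
    have hchoose : (((k + 1).choose 2 : ℕ) : ℤ) = k.choose 2 + k := by
      rw [Nat.choose_succ_succ, Nat.choose_one_right]
      push_cast
      ring
    refine ⟨x * d - x * c + 2 * k.choose 2 * d ^ k + y * c, -k.choose 2 * d ^ k + x * c + y * d,
      ?_, ?_⟩
    · rw [hchoose]
      push_cast
      linear_combination d ^ 2 * hA + (d - c) * hx + c * hy
    · rw [hchoose]
      linear_combination d ^ 2 * hB + c * hx + d * hy

section padicValNat

variable {p : ℕ} [hp : Fact p.Prime]

theorem not_dvd_fib_succ_of_dvd_fib {n : ℕ} (hn : p ∣ Nat.fib n) : ¬ p ∣ Nat.fib (n + 1) :=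
  fun h ↦ hp.out.ne_one (Nat.eq_one_of_dvd_coprimes (Nat.fib_coprime_fib_succ n) hn h)

theorem padicValNat_fib_mul_eq_add_padicValInt {n k : ℕ} (hn0 : n ≠ 0) (hn : p ∣ Nat.fib n)
    {y : ℤ} (hy : y ≠ 0) (h : (Nat.fib (k * n) : ℤ) * Nat.fib (n + 1) ^ 2 = Nat.fib n * y) :
    padicValNat p (Nat.fib (k * n)) = padicValNat p (Nat.fib n) + padicValInt p y := by
  have hc : (Nat.fib n : ℤ) ≠ 0 := by exact_mod_cast (Nat.fib_pos.mpr (Nat.pos_of_ne_zero hn0)).ne'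
  have hd : (Nat.fib (n + 1) : ℤ) ^ 2 ≠ 0 :=
    pow_ne_zero _ (by exact_mod_cast (Nat.fib_pos.mpr n.succ_pos).ne')
  have hF : (Nat.fib (k * n) : ℤ) ≠ 0 := by
    rintro h0
    rw [h0, zero_mul, eq_comm] at h
    exact mul_ne_zero hc hy h
  have hdval : padicValInt p ((Nat.fib (n + 1) : ℤ) ^ 2) = 0 := by
    rw [← Nat.cast_pow, padicValInt.of_nat, padicValNat.pow,
      padicValNat.eq_zero_of_not_dvd (not_dvd_fib_succ_of_dvd_fib hn), mul_zero]
  have := congrArg (padicValInt p) h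
  rwa [padicValInt.mul hF hd, padicValInt.mul hc hy, hdval, add_zero, padicValInt.of_nat,
    padicValInt.of_nat] at this

theorem padicValNat_fib_mul_of_not_dvd {n k : ℕ} (hn0 : n ≠ 0) (hn : p ∣ Nat.fib n)
    (hk : ¬ p ∣ k) : padicValNat p (Nat.fib (k * n)) = padicValNat p (Nat.fib n) := by
  obtain ⟨x, -, hx, -⟩ := exists_fib_mul_mul_fib_succ_sq n k
  set y : ℤ := k * Nat.fib (n + 1) ^ (k + 1) - k.choose 2 * Nat.fib n * Nat.fib (n + 1) ^ k
    + x * Nat.fib n ^ 2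
  have hy : ¬ (p : ℤ) ∣ y := by
    have hc : (Nat.fib n : ZMod p) = 0 := (ZMod.natCast_eq_zero_iff _ _).mpr hn
    have hd : (Nat.fib (n + 1) : ZMod p) ≠ 0 :=
      (ZMod.natCast_eq_zero_iff _ _).not.mpr (not_dvd_fib_succ_of_dvd_fib hn)
    have hk' : (k : ZMod p) ≠ 0 := (ZMod.natCast_eq_zero_iff _ _).not.mpr hk
    rw [← ZMod.intCast_zmod_eq_zero_iff_dvd]
    simpa [y, hc] using mul_ne_zero hk' (pow_ne_zero (k + 1) hd)
  rw [padicValNat_fib_mul_eq_add_padicValInt hn0 hn (y := y) (fun h ↦ hy (h ▸ dvd_zero _))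
    (by rw [hx]; ring), padicValInt.eq_zero_of_not_dvd hy, add_zero]

theorem padicValNat_fib_prime_mul (hp2 : p ≠ 2) {n : ℕ} (hn0 : n ≠ 0) (hn : p ∣ Nat.fib n) :
    padicValNat p (Nat.fib (p * n)) = padicValNat p (Nat.fib n) + 1 := by
  obtain ⟨x, -, hx, -⟩ := exists_fib_mul_mul_fib_succ_sq n p
  obtain ⟨c₀, hc₀⟩ : (p : ℤ) ∣ Nat.fib n := Int.natCast_dvd_natCast.mpr hn
  obtain ⟨b, hb⟩ : (p : ℤ) ∣ p.choose 2 :=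
    Int.natCast_dvd_natCast.mpr (hp.out.dvd_choose_self two_ne_zero (hp.out.two_le.lt_of_ne' hp2))
  set z : ℤ := Nat.fib (n + 1) ^ (p + 1) - b * Nat.fib n * Nat.fib (n + 1) ^ p + x * c₀ * Nat.fib n
  have hz : ¬ (p : ℤ) ∣ z := by
    have hc : (Nat.fib n : ZMod p) = 0 := (ZMod.natCast_eq_zero_iff _ _).mpr hn
    have hd : (Nat.fib (n + 1) : ZMod p) ≠ 0 :=
      (ZMod.natCast_eq_zero_iff _ _).not.mpr (not_dvd_fib_succ_of_dvd_fib hn)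
    rw [← ZMod.intCast_zmod_eq_zero_iff_dvd]
    simpa [z, hc] using pow_ne_zero (p + 1) hd
  have hz0 : z ≠ 0 := fun h ↦ hz (h ▸ dvd_zero _)
  have hfactor : (Nat.fib (p * n) : ℤ) * Nat.fib (n + 1) ^ 2 = Nat.fib n * (z * p) := by
    linear_combination hx - (Nat.fib n : ℤ) ^ 2 * Nat.fib (n + 1) ^ p * hb
      + (Nat.fib n : ℤ) ^ 2 * x * hc₀
  rw [padicValNat_fib_mul_eq_add_padicValInt hn0 hn
    (mul_ne_zero hz0 (by exact_mod_cast hp.out.ne_zero)) hfactor,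
    padicValInt_mul_eq_succ z hz0, padicValInt.eq_zero_of_not_dvd hz, zero_add]

theorem padicValNat_fib_prime_pow_mul (hp2 : p ≠ 2) {n : ℕ} (hn0 : n ≠ 0) (hn : p ∣ Nat.fib n)
    (s : ℕ) : padicValNat p (Nat.fib (p ^ s * n)) = padicValNat p (Nat.fib n) + s := by
  induction s with
  | zero => simp
  | succ s ih =>
    have hsn : p ^ s * n ≠ 0 := mul_ne_zero (pow_ne_zero s hp.out.ne_zero) hn0
    rw [pow_succ', mul_assoc, padicValNat_fib_prime_mul hp2 hsn
      (hn.trans (Nat.fib_dvd _ _ (dvd_mul_left n _))), ih, add_assoc]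

theorem padicValNat_fib_mul_s8 (hp2 : p ≠ 2) {n k : ℕ} (hn0 : n ≠ 0) (hn : p ∣ Nat.fib n)
    (hk : k ≠ 0) :
    padicValNat p (Nat.fib (k * n)) = padicValNat p (Nat.fib n) + padicValNat p k := by
  obtain ⟨s, t, ht, rfl⟩ := Nat.exists_eq_pow_mul_and_not_dvd hk p hp.out.ne_one
  have ht0 : t ≠ 0 := right_ne_zero_of_mul hk
  rw [mul_assoc, padicValNat_fib_prime_pow_mul hp2 (mul_ne_zero ht0 hn0)
      (hn.trans (Nat.fib_dvd _ _ (dvd_mul_left n t))),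
    padicValNat_fib_mul_of_not_dvd hn0 hn ht, padicValNat.mul (pow_ne_zero s hp.out.ne_zero) ht0,
    padicValNat.prime_pow, padicValNat.eq_zero_of_not_dvd ht, add_zero]

theorem padicValNat_fib_eq_ite (hp2 : p ≠ 2) {N : ℕ} (hN : 0 < N) (hpN : p ∣ Nat.fib N)
    (hα : ¬ p ∣ fibAlpha p) {m : ℕ} (hm : m ≠ 0) :
    padicValNat p (Nat.fib m) =
      if fibAlpha p ∣ m then padicValNat p (Nat.fib (fibAlpha p)) + padicValNat p m else 0 := by
  obtain ⟨hα0, hpα⟩ := fibAlpha_pos_and_dvd hN hpN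
  split_ifs with hdvd
  · obtain ⟨k, rfl⟩ := hdvd
    have hk : k ≠ 0 := right_ne_zero_of_mul hm
    rw [mul_comm, padicValNat_fib_mul_s8 hp2 hα0.ne' hpα hk, padicValNat.mul hk hα0.ne',
      padicValNat.eq_zero_of_not_dvd hα, add_zero]
  · exact padicValNat.eq_zero_of_not_dvd (mt (dvd_fib_iff_fibAlpha_dvd hN hpN m).mp hdvd)

end padicValNat

section kernel

open Submodule

variable {p α : ℕ} [hp : Fact p.Prime]

theorem pow_mul_modEq_of_dvd_sub_one (hα : α ∣ p - 1) (e n : ℕ) : p ^ e * n ≡ n [MOD α] := by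
  have hp1 : p ≡ 1 [MOD α] := ((Nat.modEq_iff_dvd' hp.out.one_le).mpr hα).symm
  simpa using (hp1.pow e).mul_right n

theorem padicValNat_pow_mul_add_pow_mul {e s n t : ℕ} (hse : s < e) (ht : ¬ p ∣ t) :
    padicValNat p (p ^ e * n + p ^ s * t) = s := by
  have hsplit : p ^ e * n + p ^ s * t = p ^ s * (p ^ (e - s) * n + t) := by
    rw [mul_add, ← mul_assoc, ← pow_add, Nat.add_sub_cancel' hse.le]
  have hndvd : ¬ p ∣ p ^ (e - s) * n + t :=
    (Nat.dvd_add_right ((dvd_pow_self p (Nat.sub_ne_zero_of_lt hse)).mul_right n)).not.mpr ht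
  have hne : p ^ (e - s) * n + t ≠ 0 := by rintro h; simp [h] at hndvd
  rw [hsplit, padicValNat.mul (pow_ne_zero s hp.out.ne_zero) hne,
    padicValNat.prime_pow, padicValNat.eq_zero_of_not_dvd hndvd, add_zero]

variable {v : ℕ → ℕ} (hα : α ∣ p - 1)
  (hv : ∀ m ≠ 0, v m = if α ∣ m then padicValNat p m + 1 else 0)
include hα hv

theorem apply_pow_mul_add_of_lt {e i : ℕ} (hi : i + 1 < p ^ e) (n : ℕ) :
    v (p ^ e * n + i + 1) = if α ∣ n + i + 1 then padicValNat p (i + 1) + 1 else 0 := by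
  obtain ⟨s, t, ht, hst⟩ :=
    Nat.exists_eq_pow_mul_and_not_dvd (n := i + 1) (by omega) p hp.out.ne_one
  have ht0 : t ≠ 0 := by rintro rfl; exact ht (dvd_zero p)
  have hse : s < e := by
    refine (Nat.pow_lt_pow_iff_right hp.out.one_lt).mp (lt_of_le_of_lt ?_ hi)
    exact hst ▸ Nat.le_mul_of_pos_right _ (Nat.pos_of_ne_zero ht0)
  have hval : padicValNat p (p ^ e * n + i + 1) = padicValNat p (i + 1) := by
    rw [add_assoc, hst, padicValNat_pow_mul_add_pow_mul hse ht, padicValNat.mul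
      (pow_ne_zero s hp.out.ne_zero) ht0, padicValNat.prime_pow,
      padicValNat.eq_zero_of_not_dvd ht, add_zero]
  have hdvd : α ∣ p ^ e * n + i + 1 ↔ α ∣ n + i + 1 :=
    (((pow_mul_modEq_of_dvd_sub_one hα e n).add_right i).add_right 1).dvd_iff dvd_rfl
  rw [hv _ (Nat.succ_ne_zero _), hval, if_congr hdvd rfl rfl]

theorem apply_mul_add_of_lt {j : ℕ} (hj : j ≤ p - 2) (n : ℕ) :
    v (p * n + j + 1) = if α ∣ n + j + 1 then 1 else 0 := by
  have hjp : j + 1 < p := by have := hp.out.two_le; omega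
  have h := apply_pow_mul_add_of_lt hα hv (e := 1) (by rwa [pow_one]) n
  rwa [pow_one, padicValNat.eq_zero_of_not_dvd (Nat.not_dvd_of_pos_of_lt j.succ_pos hjp)] at h

theorem apply_pow_mul_succ (e n : ℕ) :
    v (p ^ e * (n + 1)) = v (n + 1) + e * v (p * n + 0 + 1) := by
  have hdvd : α ∣ p ^ e * (n + 1) ↔ α ∣ n + 1 :=
    (pow_mul_modEq_of_dvd_sub_one hα e (n + 1)).dvd_iff dvd_rfl
  rw [hv _ (mul_ne_zero (pow_ne_zero e hp.out.ne_zero) n.succ_ne_zero), hv _ n.succ_ne_zero,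
    apply_mul_add_of_lt hα hv (Nat.zero_le _), if_congr hdvd rfl rfl,
    padicValNat.mul (pow_ne_zero e hp.out.ne_zero) n.succ_ne_zero, padicValNat.prime_pow]
  split_ifs <;> ring

theorem span_kKernel_eq :
    span ℤ (kKernel p fun n ↦ (v (n + 1) : ℤ)) =
      span ℤ ({fun n ↦ (v (n + 1) : ℤ)} ∪
        {b | ∃ j ≤ p - 2, b = fun n ↦ (v (p * n + j + 1) : ℤ)}) := by
  have hp1 : 0 < p - 1 := by have := hp.out.two_le; omega
  have hα0 : 0 < α := Nat.pos_of_dvd_of_pos hα hp1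
  have hαle : α ≤ p - 1 := Nat.le_of_dvd hp1 hα
  apply le_antisymm
  · rw [span_le]
    rintro _ ⟨e, i, hi, rfl⟩
    obtain hlt | heq : i + 1 < p ^ e ∨ i + 1 = p ^ e := by
      have := Nat.one_le_pow e p hp.out.pos; omega
    · have hj : i % α ≤ p - 2 := by have := Nat.mod_lt i hα0; omega
      have hfun : (fun n ↦ (v (p ^ e * n + i + 1) : ℤ)) =
          ((padicValNat p (i + 1) + 1 : ℕ) : ℤ) • fun n ↦ (v (p * n + i % α + 1) : ℤ) := by
        funext n
        have hdvd : α ∣ n + i + 1 ↔ α ∣ n + i % α + 1 :=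
          (((Nat.mod_modEq i α).symm.add_left n).add_right 1).dvd_iff dvd_rfl
        rw [Pi.smul_apply, smul_eq_mul, apply_pow_mul_add_of_lt hα hv hlt,
          apply_mul_add_of_lt hα hv hj, if_congr hdvd rfl rfl]
        split_ifs <;> simp
      rw [hfun]
      exact smul_mem _ _ (subset_span (Or.inr ⟨i % α, hj, rfl⟩))
    · have hfun : (fun n ↦ (v (p ^ e * n + i + 1) : ℤ)) =
          (fun n ↦ (v (n + 1) : ℤ)) + (e : ℤ) • fun n ↦ (v (p * n + 0 + 1) : ℤ) := by
        funext n
        rw [Pi.add_apply, Pi.smul_apply, smul_eq_mul, add_assoc, heq, ← mul_add_one,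
          apply_pow_mul_succ hα hv]
        push_cast
        rfl
      rw [hfun]
      exact add_mem (subset_span (Or.inl rfl))
        (smul_mem _ _ (subset_span (Or.inr ⟨0, Nat.zero_le _, rfl⟩)))
  · rw [span_le]
    rintro _ (rfl | ⟨j, hj, rfl⟩) <;> apply subset_span
    · exact ⟨0, 0, by simp, by simp⟩
    · exact ⟨1, j, by rw [pow_one]; omega, by simp⟩

end kernel

theorem singleton_union_setOf_eq_coe_finset {M : Type*} [DecidableEq M] (a : M) (g : ℕ → M)
    (N : ℕ) :
    ({a} ∪ {b | ∃ j ≤ N, b = g j} : Set M) = ↑(insert a ((Finset.range (N + 1)).image g)) := by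
  ext b
  simp [eq_comm]

theorem fg_span_and_rank_span_le {R M : Type*} [Ring R] [StrongRankCondition R] [AddCommGroup M]
    [Module R M] (a : M) (g : ℕ → M) (N : ℕ) :
    (Submodule.span R ({a} ∪ {b | ∃ j ≤ N, b = g j})).FG ∧
      Module.rank R (Submodule.span R ({a} ∪ {b | ∃ j ≤ N, b = g j})) ≤ N + 2 := by
  classical
  rw [singleton_union_setOf_eq_coe_finset]
  refine ⟨⟨_, rfl⟩, (rank_span_finset_le _).trans ?_⟩
  have hcard : (insert a ((Finset.range (N + 1)).image g)).card ≤ N + 2 :=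
    (Finset.card_insert_le _ _).trans
      (Nat.add_le_add_right (Finset.card_image_le.trans (Finset.card_range _).le) 1)
  exact_mod_cast hcard

theorem p_regular_1_4 (p : ℕ) (hp : p.Prime) (h : p % 5 = 1 ∨ p % 5 = 4)
    (hwall : padicValNat p (Nat.fib (fibAlpha p)) = 1) :
    Submodule.span ℤ (kKernel p (fun n => (padicValNat p (Nat.fib (n + 1)) : ℤ))) =
      Submodule.span ℤ
        ({fun n => (padicValNat p (Nat.fib (n + 1)) : ℤ)} ∪
          {b | ∃ j ≤ p - 2,
            b = fun n => (padicValNat p (Nat.fib (p * n + j + 1)) : ℤ)}) ∧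
    (Submodule.span ℤ
        (kKernel p (fun n => (padicValNat p (Nat.fib (n + 1)) : ℤ)))).FG ∧
    Module.rank ℤ
        (Submodule.span ℤ
          (kKernel p (fun n => (padicValNat p (Nat.fib (n + 1)) : ℤ)))) ≤ p := by
  have : Fact p.Prime := ⟨hp⟩
  have hp2 : p ≠ 2 := by rintro rfl; omega
  have hp1 : 0 < p - 1 := by have := hp.two_le; omega
  have hd : p ∣ Nat.fib (p - 1) := dvd_fib_sub_one_of_mod_five h
  have hα : fibAlpha p ∣ p - 1 := (dvd_fib_iff_fibAlpha_dvd hp1 hd _).mp hd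
  have hαp : ¬ p ∣ fibAlpha p := Nat.not_dvd_of_pos_of_lt (fibAlpha_pos_and_dvd hp1 hd).1
    ((Nat.le_of_dvd hp1 hα).trans_lt (Nat.sub_lt hp.pos one_pos))
  have hspan := span_kKernel_eq (v := fun m ↦ padicValNat p (Nat.fib m)) hα fun m hm ↦ by
    rw [padicValNat_fib_eq_ite hp2 hp1 hd hαp hm, hwall, add_comm]
  obtain ⟨hfg, hrank⟩ := fg_span_and_rank_span_le (R := ℤ)
    (fun n ↦ (padicValNat p (Nat.fib (n + 1)) : ℤ))
    (fun j n ↦ (padicValNat p (Nat.fib (p * n + j + 1)) : ℤ)) (p - 2)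
  refine ⟨hspan, hspan ▸ hfg, hspan ▸ hrank.trans ?_⟩
  exact_mod_cast Nat.sub_add_cancel hp.two_le |>.le
end

section
/- Let p be a prime with p ≡ 13 or 17 (mod 20) such that ν_p(F_{α(p)}) = 1. Then the ℤ-submodule of the module of sequences ℕ → ℤ spanned by the p-kernel of the sequence a(n) = ν_p(F_{n+1}) is generated by the (p+3)/2 sequences n ↦ ν_p(F_{n+1}) and n ↦ ν_p(F_{pn+j+1}) for 0 ≤ j ≤ (p−1)/2. In particular, this sequence is p-regular of rank at most (p+3)/2. -/
open Nat (fib)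

theorem ZMod.not_isSquare_five {p : ℕ} [Fact p.Prime] (hp2 : p ≠ 2) (h5 : p % 5 = 2 ∨ p % 5 = 3) :
    ¬ IsSquare (5 : ZMod p) := by
  have h2 : ¬ IsSquare ((2 : ℕ) : ZMod 5) := by decide
  have h3 : ¬ IsSquare ((3 : ℕ) : ZMod 5) := by decide
  have : Fact (Nat.Prime 5) := ⟨by norm_num⟩
  rw [← Nat.cast_ofNat (R := ZMod p) (n := 5),
    ← ZMod.exists_sq_eq_prime_iff_of_mod_four_eq_one rfl hp2, ← ZMod.natCast_mod]
  rcases h5 with h | h <;> rwa [h]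

namespace QuadraticAlgebra

variable {R : Type*} [CommRing R]

theorem omega_pow_succ_eq_mk_fib (n : ℕ) :
    (ω : QuadraticAlgebra R 1 1) ^ (n + 1) = ⟨fib n, fib (n + 1)⟩ := by
  induction n with
  | zero => ext <;> simp
  | succ n ih =>
    rw [pow_succ, ih]
    ext <;> simp [Nat.fib_add_two]

theorem im_omega_pow (n : ℕ) : ((ω : QuadraticAlgebra R 1 1) ^ n).im = fib n := by
  cases n with
  | zero => simp
  | succ n => rw [omega_pow_succ_eq_mk_fib]

theorem omega_mul_star_omega : (ω : QuadraticAlgebra R 1 1) * star ω = -1 := by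
  ext <;> simp

theorem omega_add_star_omega : (ω : QuadraticAlgebra R 1 1) + star ω = 1 := by
  ext <;> simp

theorem sq_omega_sub_star_omega : ((ω : QuadraticAlgebra R 1 1) - star ω) ^ 2 = 5 := by
  ext <;> simp [sq] <;> norm_num

theorem omega_pow_prime_eq_star_omega {p : ℕ} [Fact p.Prime] (hp2 : p ≠ 2)
    (h5 : ¬ IsSquare (5 : ZMod p)) :
    (ω : QuadraticAlgebra (ZMod p) 1 1) ^ p = star ω := by
  have : CharP (QuadraticAlgebra (ZMod p) 1 1) p :=
    charP_of_injective_algebraMap algebraMap_injective p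
  have hodd : Odd p := (Fact.out : p.Prime).odd_of_ne_two hp2
  have h50 : (5 : ZMod p) ≠ 0 := fun h0 => h5 (h0 ▸ IsSquare.zero)
  have heuler : (5 : ZMod p) ^ (p / 2) = -1 :=
    (ZMod.pow_div_two_eq_neg_one_or_one p h50).resolve_left
      fun h => h5 ((ZMod.euler_criterion p h50).2 h)
  -- `√5 = ω - ω̄` is sent to `-√5` by Frobenius, since `5` is not a square mod `p`
  have hfrob : ((ω : QuadraticAlgebra (ZMod p) 1 1) - star ω) ^ p = -(ω - star ω) := by
    have hp : (ω - star ω : QuadraticAlgebra (ZMod p) 1 1) ^ p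
        = ((ω - star ω) ^ 2) ^ (p / 2) * (ω - star ω) := by
      rw [← pow_mul, ← pow_succ, Nat.two_mul_div_two_add_one_of_odd hodd]
    rw [hp, sq_omega_sub_star_omega,
      ← map_ofNat (algebraMap (ZMod p) _), ← map_pow, heuler, map_neg, map_one, neg_one_mul]
  have hsum := congrArg (· ^ p) (omega_add_star_omega (R := ZMod p))
  simp only [add_pow_char, one_pow] at hsum
  rw [sub_pow_char] at hfrob
  have h2 : IsUnit (2 : QuadraticAlgebra (ZMod p) 1 1) := by
    rw [← map_ofNat (algebraMap (ZMod p) _)]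
    exact (isUnit_iff_ne_zero.2 (Ring.two_ne_zero (by rwa [ZMod.ringChar_zmod_n]))).map _
  refine h2.mul_left_cancel ?_
  linear_combination hsum + hfrob - omega_add_star_omega (R := ZMod p)

end QuadraticAlgebra

open QuadraticAlgebra

theorem ZMod.natCast_fib_half_eq_zero {p : ℕ} [Fact p.Prime] (hp4 : p % 4 = 1)
    (h5 : ¬ IsSquare (5 : ZMod p)) : (fib ((p + 1) / 2) : ZMod p) = 0 := by
  set m := (p + 1) / 2
  have hm : Odd m := ⟨p / 4, by omega⟩
  set z := (ω : QuadraticAlgebra (ZMod p) 1 1) ^ m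
  have hzz : z * z = -1 := by
    rw [← pow_add, show m + m = p + 1 by omega, pow_succ,
      omega_pow_prime_eq_star_omega (by omega) h5, mul_comm, omega_mul_star_omega]
  have hzs : z * star z = -1 := by
    rw [star_pow, ← mul_pow, omega_mul_star_omega, hm.neg_one_pow]
  have hz : z - star z = 0 := by linear_combination (z - star z) * hzz - z * (hzz - hzs)
  have := congrArg re hz
  rw [sub_star, im_omega_pow] at this
  simpa using this

theorem Nat.Prime.dvd_fib_half {p : ℕ} (hp : p.Prime) (h : p % 20 = 13 ∨ p % 20 = 17) :
    p ∣ fib ((p + 1) / 2) := by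
  have := Fact.mk hp
  exact (ZMod.natCast_eq_zero_iff _ p).1
    (ZMod.natCast_fib_half_eq_zero (by omega) (ZMod.not_isSquare_five (by omega) (by omega)))

-- `ω² = 1 + ω`: `ω` and `star ω` play the roles of `φ` and `1 - φ`.
local notation "ℤ[φ]" => QuadraticAlgebra ℤ 1 1

theorem dvd_add_pow_prime_sub_sub {R : Type*} [CommRing R] {p : ℕ} (hp : p.Prime) (hp2 : p ≠ 2)
    {d x y : R} (h2 : d ∣ p * y ^ 2) (h3 : d ∣ y ^ 3) :
    d ∣ (x + y) ^ p - x ^ (p - 1) * y * p - x ^ p := by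
  obtain ⟨q, rfl⟩ : ∃ q, p = q + 2 := ⟨p - 2, by have := hp.two_le; omega⟩
  rw [add_pow, Finset.sum_range_succ, Finset.sum_range_succ]
  simp only [Nat.choose_self, Nat.choose_succ_self_right, Nat.sub_self,
    show q + 2 - (q + 1) = 1 by omega, show q + 2 - 1 = q + 1 by omega, pow_zero, pow_one,
    mul_one, Nat.cast_one]
  convert Finset.dvd_sum (s := Finset.range (q + 1)) fun j hj => ?_ using 1
  · push_cast
    ring
  rcases Nat.eq_zero_or_pos j with rfl | hj0
  · simpa using h3.trans (pow_dvd_pow y (by omega))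
  · obtain ⟨c, hc⟩ := hp.dvd_choose_self hj0.ne' (by simp at hj; omega)
    rw [hc, show q + 2 - j = 2 + (q - j) by simp at hj; omega, pow_add]
    exact h2.trans ⟨x ^ j * y ^ (q - j) * c, by push_cast; ring⟩

theorem dvd_fib_succ_mul_sub_of_intCast_dvd {D : ℤ} (m k : ℕ) (h : (D : ℤ[φ]) ∣
    ((fib m : ℤ[φ]) + (fib (m + 1) : ℤ[φ]) * ω) ^ k
      - (fib m : ℤ[φ]) ^ (k - 1) * ((fib (m + 1) : ℤ[φ]) * ω) * (k : ℤ[φ]) - (fib m : ℤ[φ]) ^ k) :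
    D ∣ fib ((m + 1) * k) - fib m ^ (k - 1) * fib (m + 1) * k := by
  have hω : (ω : ℤ[φ]) ^ ((m + 1) * k) = ((fib m : ℤ[φ]) + (fib (m + 1) : ℤ[φ]) * ω) ^ k := by
    rw [pow_mul, omega_pow_succ_eq_mk_fib]
    congr 1
    ext <;> simp
  rw [← hω, ← eq_intCast (algebraMap ℤ ℤ[φ])] at h
  obtain ⟨c, hc⟩ := (algebraMap_dvd_iff.1 h).2
  refine ⟨c, ?_⟩
  simp only [im_sub, im_mul, re_mul, re_natCast, im_natCast, omega_re, omega_im, im_omega_pow,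
    ← Nat.cast_pow] at hc
  push_cast at hc
  linear_combination hc

theorem exists_fib_succ_mul_eq_mul (m k : ℕ) : ∃ Q, fib ((m + 1) * k) = fib (m + 1) * Q ∧
    (fib (m + 1) : ℤ) ∣ Q - fib m ^ (k - 1) * k := by
  obtain ⟨Q, hQ⟩ := Nat.fib_dvd (m + 1) ((m + 1) * k) (dvd_mul_right _ _)
  have hF : (fib (m + 1) : ℤ) ≠ 0 := by exact_mod_cast (Nat.fib_pos.2 m.succ_pos).ne'
  refine ⟨Q, hQ, (mul_dvd_mul_iff_right hF).1 ?_⟩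
  have h := sq_dvd_add_pow_sub_sub ((fib (m + 1) : ℤ[φ]) * ω) (fib m : ℤ[φ]) k
  rw [mul_pow] at h
  have := dvd_fib_succ_mul_sub_of_intCast_dvd (D := fib (m + 1) ^ 2) m k
    (by push_cast; exact (dvd_mul_right _ _).trans h)
  rwa [hQ, sq, show ((fib (m + 1) * Q : ℕ) : ℤ) - fib m ^ (k - 1) * fib (m + 1) * k
    = (Q - fib m ^ (k - 1) * k) * fib (m + 1) by push_cast; ring] at this

theorem exists_fib_succ_mul_prime_eq_mul {p m : ℕ} (hp : p.Prime) (hp2 : p ≠ 2)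
    (hpm : p ∣ fib (m + 1)) : ∃ Q, fib ((m + 1) * p) = fib (m + 1) * Q ∧
    (p * fib (m + 1) : ℤ) ∣ Q - fib m ^ (p - 1) * p := by
  obtain ⟨Q, hQ⟩ := Nat.fib_dvd (m + 1) ((m + 1) * p) (dvd_mul_right _ _)
  have hF : (fib (m + 1) : ℤ) ≠ 0 := by exact_mod_cast (Nat.fib_pos.2 m.succ_pos).ne'
  refine ⟨Q, hQ, (mul_dvd_mul_iff_right hF).1 ?_⟩
  obtain ⟨c, hc⟩ := hpm
  have := dvd_fib_succ_mul_sub_of_intCast_dvd (D := p * fib (m + 1) ^ 2) m p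
    (dvd_add_pow_prime_sub_sub hp hp2 ⟨ω ^ 2, by push_cast; ring⟩
      ⟨(c : ℤ[φ]) * ω ^ 3, by push_cast [hc]; ring⟩)
  rwa [hQ, sq, ← mul_assoc, show ((fib (m + 1) * Q : ℕ) : ℤ) - fib m ^ (p - 1) * fib (m + 1) * p
    = (Q - fib m ^ (p - 1) * p) * fib (m + 1) by push_cast; ring] at this

theorem not_dvd_fib_of_dvd_fib_succ {p m : ℕ} (hp : p.Prime) (h : p ∣ fib (m + 1)) :
    ¬ p ∣ fib m :=
  fun h' => hp.one_lt.ne' (Nat.eq_one_of_dvd_coprimes (Nat.fib_coprime_fib_succ m) h' h)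

theorem padicValNat_fib_mul_of_not_dvd_s12 {p m k : ℕ} (hp : p.Prime) (hm : m ≠ 0)
    (hpm : p ∣ fib m) (hk : ¬ p ∣ k) :
    padicValNat p (fib (m * k)) = padicValNat p (fib m) := by
  have := Fact.mk hp
  obtain ⟨m, rfl⟩ := Nat.exists_eq_succ_of_ne_zero hm
  obtain ⟨Q, hQ, hdvd⟩ := exists_fib_succ_mul_eq_mul m k
  have hk0 : k ≠ 0 := by rintro rfl; exact hk (dvd_zero p)
  have hQ0 : Q ≠ 0 := by
    rintro rfl
    simp [Nat.fib_eq_zero, hk0] at hQ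
  have hpQ : ¬ p ∣ Q := by
    intro hpQ
    have hpZ : Prime (p : ℤ) := Nat.prime_iff_prime_int.1 hp
    have : (p : ℤ) ∣ fib m ^ (k - 1) * k := by
      simpa using dvd_sub (Int.natCast_dvd_natCast.2 hpQ)
        ((Int.natCast_dvd_natCast.2 hpm).trans hdvd)
    rcases hpZ.dvd_or_dvd this with h | h
    · exact not_dvd_fib_of_dvd_fib_succ hp hpm (Int.natCast_dvd_natCast.1 (hpZ.dvd_of_dvd_pow h))
    · exact hk (Int.natCast_dvd_natCast.1 h)
  rw [hQ, padicValNat.mul (Nat.fib_pos.2 m.succ_pos).ne' hQ0, padicValNat.eq_zero_of_not_dvd hpQ,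
    add_zero]

theorem padicValNat_fib_mul_prime {p m : ℕ} (hp : p.Prime) (hp2 : p ≠ 2) (hm : m ≠ 0)
    (hpm : p ∣ fib m) :
    padicValNat p (fib (m * p)) = padicValNat p (fib m) + 1 := by
  have := Fact.mk hp
  obtain ⟨m, rfl⟩ := Nat.exists_eq_succ_of_ne_zero hm
  obtain ⟨Q, hQ, hdvd⟩ := exists_fib_succ_mul_prime_eq_mul hp hp2 hpm
  have hQ0 : Q ≠ 0 := by
    rintro rfl
    simp [Nat.fib_eq_zero, hp.ne_zero] at hQ
  have hpZ : Prime (p : ℤ) := Nat.prime_iff_prime_int.1 hp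
  have hsq : (p : ℤ) ^ 2 ∣ Q - fib m ^ (p - 1) * p :=
    (sq (p : ℤ) ▸ mul_dvd_mul_left _ (Int.natCast_dvd_natCast.2 hpm)).trans hdvd
  have h1 : p ^ 1 ∣ Q := by
    have := dvd_add ((dvd_pow_self _ two_ne_zero).trans hsq)
      (dvd_mul_left (p : ℤ) (fib m ^ (p - 1)))
    rw [sub_add_cancel] at this
    simpa using Int.natCast_dvd_natCast.1 this
  have h2 : ¬ p ^ 2 ∣ Q := by
    intro h2
    have : (p : ℤ) * p ∣ fib m ^ (p - 1) * p := by
      simpa [sq] using dvd_sub (Int.natCast_dvd_natCast.2 h2) hsq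
    exact not_dvd_fib_of_dvd_fib_succ hp hpm (Int.natCast_dvd_natCast.1
      (hpZ.dvd_of_dvd_pow ((mul_dvd_mul_iff_right (by exact_mod_cast hp.ne_zero)).1 this)))
  rw [padicValNat_dvd_iff_le hQ0] at h1 h2
  rw [hQ, padicValNat.mul (Nat.fib_pos.2 m.succ_pos).ne' hQ0]
  omega

theorem padicValNat_fib_mul_s12 {p m k : ℕ} (hp : p.Prime) (hp2 : p ≠ 2) (hm : m ≠ 0)
    (hpm : p ∣ fib m) (hk : k ≠ 0) :
    padicValNat p (fib (m * k)) = padicValNat p (fib m) + padicValNat p k := by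
  have := Fact.mk hp
  obtain ⟨e, u, hu, rfl⟩ := Nat.exists_eq_pow_mul_and_not_dvd hk p hp.ne_one
  have hpow : ∀ e, p ∣ fib (m * p ^ e) ∧
      padicValNat p (fib (m * p ^ e)) = padicValNat p (fib m) + e := by
    intro e
    induction e with
    | zero => simpa using hpm
    | succ e ih =>
      have hme : m * p ^ e ≠ 0 := mul_ne_zero hm (pow_ne_zero _ hp.ne_zero)
      rw [pow_succ, ← mul_assoc, padicValNat_fib_mul_prime hp hp2 hme ih.1, ih.2]
      exact ⟨ih.1.trans (Nat.fib_dvd _ _ (dvd_mul_right _ _)), rfl⟩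
  have hme : m * p ^ e ≠ 0 := mul_ne_zero hm (pow_ne_zero _ hp.ne_zero)
  rw [← mul_assoc, padicValNat_fib_mul_of_not_dvd_s12 hp hme (hpow e).1 hu, (hpow e).2,
    padicValNat.mul (pow_ne_zero _ hp.ne_zero) (by rintro rfl; exact hu (dvd_zero p)),
    padicValNat.prime_pow, padicValNat.eq_zero_of_not_dvd hu, add_zero]

theorem fibAlpha_pos_and_dvd_s12 {p : ℕ} (h : ∃ n, 0 < n ∧ p ∣ fib n) :
    0 < fibAlpha p ∧ p ∣ fib (fibAlpha p) :=
  Nat.sInf_mem h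

theorem dvd_fib_iff_fibAlpha_dvd_s12 {p : ℕ} (h : ∃ n, 0 < n ∧ p ∣ fib n) (n : ℕ) :
    p ∣ fib n ↔ fibAlpha p ∣ n := by
  obtain ⟨hα0, hα⟩ := fibAlpha_pos_and_dvd_s12 h
  refine ⟨fun hn => ?_, fun hαn => hα.trans (Nat.fib_dvd _ _ hαn)⟩
  have hg : fibAlpha p ≤ n.gcd (fibAlpha p) :=
    Nat.sInf_le ⟨Nat.gcd_pos_of_pos_right _ hα0, Nat.fib_gcd n _ ▸ Nat.dvd_gcd hn hα⟩
  rw [← Nat.le_antisymm (Nat.le_of_dvd hα0 (Nat.gcd_dvd_right _ _)) hg]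
  exact Nat.gcd_dvd_left _ _

theorem padicValNat_fib_eq_ite_s12 {p α n : ℕ} (hp : p.Prime) (hp2 : p ≠ 2)
    (hα : ∀ n, p ∣ fib n ↔ α ∣ n) (hpα : ¬ p ∣ α) (hn : n ≠ 0) :
    padicValNat p (fib n) = if α ∣ n then padicValNat p (fib α) + padicValNat p n else 0 := by
  have := Fact.mk hp
  split_ifs with hαn
  · obtain ⟨k, rfl⟩ := hαn
    have hα0 : α ≠ 0 := left_ne_zero_of_mul hn
    have hk : k ≠ 0 := right_ne_zero_of_mul hn
    rw [padicValNat_fib_mul_s12 hp hp2 hα0 ((hα α).2 dvd_rfl) hk, padicValNat.mul hα0 hk,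
      padicValNat.eq_zero_of_not_dvd hpα, zero_add]
  · exact padicValNat.eq_zero_of_not_dvd fun h => hαn ((hα n).1 h)

theorem exists_lt_forall_dvd_pow_mul_add_iff {p α : ℕ} (hcop : p.Coprime α) (hα : 0 < α)
    (e c : ℕ) : ∃ j < α, ∀ n, α ∣ p ^ (e + 1) * n + c ↔ α ∣ p * n + j + 1 := by
  have : NeZero α := ⟨hα.ne'⟩
  set v := ZMod.unitOfCoprime p hcop ^ e
  set z : ZMod α := c * ↑v⁻¹
  refine ⟨(z - 1).val, ZMod.val_lt _, fun n => ?_⟩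
  have hpv : (p : ZMod α) ^ e = v := by simp [v]
  have key : ((p ^ (e + 1) * n + c : ℕ) : ZMod α) = v * ((p * n + (z - 1).val + 1 : ℕ)) := by
    push_cast
    rw [ZMod.natCast_zmod_val]
    linear_combination (p * n : ZMod α) * hpv - (c : ZMod α) * Units.mul_inv v
  rw [← ZMod.natCast_eq_zero_iff, ← ZMod.natCast_eq_zero_iff, key, Units.mul_right_eq_zero]

theorem padicValNat_pow_mul_add {p e c : ℕ} (hp : p.Prime) (hc : c ≠ 0) (hce : c < p ^ e)
    (n : ℕ) : padicValNat p (p ^ e * n + c) = padicValNat p c := by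
  have := Fact.mk hp
  obtain ⟨s, w, hw, rfl⟩ := Nat.exists_eq_pow_mul_and_not_dvd hc p hp.ne_one
  have hw0 : w ≠ 0 := by rintro rfl; exact hw (dvd_zero p)
  have hse : s < e := (Nat.pow_lt_pow_iff_right hp.one_lt).1
    ((Nat.le_mul_of_pos_right _ (Nat.pos_of_ne_zero hw0)).trans_lt hce)
  obtain ⟨t, rfl⟩ := Nat.exists_eq_add_of_lt hse
  have hnd : ¬ p ∣ p ^ (t + 1) * n + w := fun h =>
    hw ((Nat.dvd_add_right (dvd_mul_of_dvd_left (dvd_pow_self p t.succ_ne_zero) n)).1 h)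
  rw [show p ^ (s + t + 1) * n + p ^ s * w = p ^ s * (p ^ (t + 1) * n + w) by ring,
    padicValNat.mul (pow_ne_zero _ hp.ne_zero) (by rintro h; exact hnd (h ▸ dvd_zero p)),
    padicValNat.mul (pow_ne_zero _ hp.ne_zero) hw0, padicValNat.eq_zero_of_not_dvd hnd,
    padicValNat.eq_zero_of_not_dvd hw]

theorem padicValNat_fib_prime_mul_add {p α j : ℕ}
    (hval : ∀ n ≠ 0, padicValNat p (fib n) = if α ∣ n then padicValNat p n + 1 else 0)
    (hj : j + 1 < p) (n : ℕ) :
    padicValNat p (fib (p * n + j + 1)) = if α ∣ p * n + j + 1 then 1 else 0 := by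
  have hnd : ¬ p ∣ p * n + j + 1 := by
    rw [add_assoc, Nat.dvd_add_right (dvd_mul_right p n)]
    exact Nat.not_dvd_of_pos_of_lt j.succ_pos hj
  simp [hval _ (show p * n + j + 1 ≠ 0 by omega), padicValNat.eq_zero_of_not_dvd hnd]

theorem exists_fib_pow_mul_add_pow_eq {p α : ℕ} (hp : p.Prime) (hα0 : 0 < α) (hαp : α < p)
    (hval : ∀ n ≠ 0, padicValNat p (fib n) = if α ∣ n then padicValNat p n + 1 else 0)
    (e : ℕ) : ∃ j < α,
      (fun n => (padicValNat p (fib (p ^ (e + 1) * n + p ^ (e + 1))) : ℤ)) =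
        (fun n => (padicValNat p (fib (n + 1)) : ℤ)) +
          ((e + 1 : ℕ) : ℤ) • fun n => (padicValNat p (fib (p * n + j + 1)) : ℤ) := by
  have := Fact.mk hp
  have hcop : p.Coprime α := Nat.coprime_of_lt_prime hα0.ne' hαp hp
  obtain ⟨j, hj, hjα⟩ := exists_lt_forall_dvd_pow_mul_add_iff hcop hα0 e (p ^ (e + 1))
  refine ⟨j, hj, funext fun n => ?_⟩
  have hmul : p ^ (e + 1) * n + p ^ (e + 1) = p ^ (e + 1) * (n + 1) := by ring
  have hαdvd : α ∣ p ^ (e + 1) * (n + 1) ↔ α ∣ n + 1 := (hcop.pow_left _).symm.dvd_mul_left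
  simp only [Pi.add_apply, Pi.smul_apply, smul_eq_mul,
    padicValNat_fib_prime_mul_add hval (by omega : j + 1 < p), ← hjα, hmul, hαdvd,
    hval _ n.succ_ne_zero, hval _ (mul_ne_zero (pow_ne_zero _ hp.ne_zero) n.succ_ne_zero),
    padicValNat.mul (pow_ne_zero _ hp.ne_zero) n.succ_ne_zero, padicValNat.prime_pow]
  split_ifs <;> push_cast <;> ring

theorem exists_fib_pow_mul_add_eq {p α e c : ℕ} (hp : p.Prime) (hα0 : 0 < α) (hαp : α < p)
    (hval : ∀ n ≠ 0, padicValNat p (fib n) = if α ∣ n then padicValNat p n + 1 else 0)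
    (hc0 : c ≠ 0) (hc : c < p ^ (e + 1)) : ∃ j < α,
      (fun n => (padicValNat p (fib (p ^ (e + 1) * n + c)) : ℤ)) =
        ((padicValNat p c + 1 : ℕ) : ℤ) • fun n => (padicValNat p (fib (p * n + j + 1)) : ℤ) := by
  obtain ⟨j, hj, hjα⟩ := exists_lt_forall_dvd_pow_mul_add_iff
    (Nat.coprime_of_lt_prime hα0.ne' hαp hp) hα0 e c
  refine ⟨j, hj, funext fun n => ?_⟩
  simp only [Pi.smul_apply, smul_eq_mul,
    padicValNat_fib_prime_mul_add hval (by omega : j + 1 < p), ← hjα,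
    hval (p ^ (e + 1) * n + c) (by omega), padicValNat_pow_mul_add hp hc0 hc]
  split_ifs <;> simp

theorem kKernel_subset_span {p α : ℕ} (hp : p.Prime) (hα0 : 0 < α) (hαp : α < p)
    (hval : ∀ n ≠ 0, padicValNat p (fib n) = if α ∣ n then padicValNat p n + 1 else 0) :
    kKernel p (fun n => (padicValNat p (fib (n + 1)) : ℤ)) ⊆
      Submodule.span ℤ ({fun n => (padicValNat p (fib (n + 1)) : ℤ)} ∪
        {b | ∃ j < α, b = fun n => (padicValNat p (fib (p * n + j + 1)) : ℤ)}) := by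
  set S : Set (ℕ → ℤ) := {fun n => (padicValNat p (fib (n + 1)) : ℤ)} ∪
    {b | ∃ j < α, b = fun n => (padicValNat p (fib (p * n + j + 1)) : ℤ)}
  have hg (j : ℕ) (hj : j < α) :
      (fun n => (padicValNat p (fib (p * n + j + 1)) : ℤ)) ∈ Submodule.span ℤ S :=
    Submodule.subset_span (Or.inr ⟨j, hj, rfl⟩)
  rintro _ ⟨e, i, hi, rfl⟩
  cases e with
  | zero =>
    obtain rfl : i = 0 := by simpa using hi
    exact Submodule.subset_span (Or.inl (by simp))
  | succ e =>
    show (fun n => (padicValNat p (fib (p ^ (e + 1) * n + (i + 1))) : ℤ)) ∈ _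
    rcases (show i + 1 ≤ p ^ (e + 1) by have := pow_pos hp.pos (e + 1); omega).eq_or_lt
      with hc | hc
    · obtain ⟨j, hj, hjeq⟩ := exists_fib_pow_mul_add_pow_eq hp hα0 hαp hval e
      rw [hc, hjeq]
      exact add_mem (Submodule.subset_span (Or.inl rfl)) (Submodule.smul_mem _ _ (hg j hj))
    · obtain ⟨j, hj, hjeq⟩ := exists_fib_pow_mul_add_eq hp hα0 hαp hval i.succ_ne_zero hc
      rw [hjeq]
      exact Submodule.smul_mem _ _ (hg j hj)

theorem singleton_union_subset_kKernel {p N : ℕ} (hN : N < p) (a : ℕ → ℤ) :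
    {a} ∪ {b | ∃ j ≤ N, b = fun n => a (p * n + j)} ⊆ kKernel p a := by
  rintro b (rfl | ⟨j, hj, rfl⟩)
  · exact ⟨0, 0, by simp, by simp⟩
  · exact ⟨1, j, by simp; omega, by simp⟩

theorem singleton_union_setOf_exists_le_eq {M : Type*} [DecidableEq M] (a : M) (g : ℕ → M) (N : ℕ) :
    {a} ∪ {b | ∃ j ≤ N, b = g j} = ↑(insert a ((Finset.range (N + 1)).image g)) := by
  ext b
  simp [eq_comm]

section SpanOfFiniteFamily

variable {R M : Type*} [Ring R] [AddCommGroup M] [Module R M]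

theorem fg_span_singleton_union (a : M) (g : ℕ → M) (N : ℕ) :
    (Submodule.span R ({a} ∪ {b | ∃ j ≤ N, b = g j})).FG := by
  classical
  rw [singleton_union_setOf_exists_le_eq]
  exact Submodule.fg_span (Finset.finite_toSet _)

theorem rank_span_singleton_union_le [StrongRankCondition R] (a : M) (g : ℕ → M) (N : ℕ) :
    Module.rank R (Submodule.span R ({a} ∪ {b | ∃ j ≤ N, b = g j})) ≤ (N + 2 : ℕ) := by
  classical
  rw [singleton_union_setOf_exists_le_eq]
  refine (rank_span_finset_le _).trans ?_
  exact_mod_cast (Finset.card_insert_le _ _).trans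
    (by simpa using Finset.card_image_le (s := Finset.range (N + 1)) (f := g))

end SpanOfFiniteFamily

theorem p_regular_13_17 (p : ℕ) (hp : p.Prime)
    (h : p % 20 = 13 ∨ p % 20 = 17)
    (hwall : padicValNat p (Nat.fib (fibAlpha p)) = 1) :
    Submodule.span ℤ (kKernel p (fun n => (padicValNat p (Nat.fib (n + 1)) : ℤ))) =
      Submodule.span ℤ
        ({fun n => (padicValNat p (Nat.fib (n + 1)) : ℤ)} ∪
          {b | ∃ j ≤ (p - 1) / 2,
            b = fun n => (padicValNat p (Nat.fib (p * n + j + 1)) : ℤ)}) ∧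
    (Submodule.span ℤ
        (kKernel p (fun n => (padicValNat p (Nat.fib (n + 1)) : ℤ)))).FG ∧
    Module.rank ℤ
        (Submodule.span ℤ
          (kKernel p (fun n => (padicValNat p (Nat.fib (n + 1)) : ℤ)))) ≤
      (((p + 3) / 2 : ℕ) : Cardinal) := by
  have hp2 : p ≠ 2 := by omega
  have hex : ∃ n, 0 < n ∧ p ∣ fib n := ⟨_, by omega, hp.dvd_fib_half h⟩
  have hα0 := (fibAlpha_pos_and_dvd_s12 hex).1
  have hαle : fibAlpha p ≤ (p + 1) / 2 := Nat.sInf_le ⟨by omega, hp.dvd_fib_half h⟩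
  have hval (n : ℕ) (hn : n ≠ 0) : padicValNat p (fib n) =
      if fibAlpha p ∣ n then padicValNat p n + 1 else 0 := by
    rw [padicValNat_fib_eq_ite_s12 hp hp2 (dvd_fib_iff_fibAlpha_dvd_s12 hex)
      (Nat.not_dvd_of_pos_of_lt hα0 (by omega)) hn, hwall, add_comm]
  have hspan := le_antisymm
    (Submodule.span_le.2 ((kKernel_subset_span hp hα0 (by omega) hval).trans
      (Submodule.span_mono (Set.union_subset_union_right _ (by
        rintro b ⟨j, hj, rfl⟩
        exact ⟨j, by omega, rfl⟩)))))
    (Submodule.span_mono (singleton_union_subset_kKernel (by omega : (p - 1) / 2 < p) _))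
  rw [hspan]
  refine ⟨rfl, fg_span_singleton_union _ _ _, (rank_span_singleton_union_le _ _ _).trans ?_⟩
  rw [show (p - 1) / 2 + 2 = (p + 3) / 2 by omega]
end
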